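/- arXiv:math/0601014 — 2 statements merged into one kernel-verified Lean document; each statement's English description precedes it below -/
import Mathlib

section
/- Nilpotency of the kernel of the multiplication map on eigencomponents: Let G be a finite abelian group acting on R = ℂ[x₁,…,xₙ], let A be a commutative ℂ-algebra that is an R^G-algebra and an integral domain containing R^G, and consider α: A ⊗_{R^G} R → Frac(A)·K given by a ⊗ b ↦ ab (where the product is taken in a common field). For each χ ∈ G^∨, every element of the kernel of the restriction α_χ: A ⊗_{R^G} R_χ → K satisfies z^{|G|} ∈ ker(α restricted to the trivial-weight component) = 0; in particular ker α consists of nilpotent elements. -/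
open scoped TensorProduct

/-- The subring of `G`-invariant elements `R^G` of `R`. -/
def fixedSubring (G R : Type*) [Monoid G] [CommRing R] [MulSemiringAction G R] :
    Subring R where
  carrier := {x : R | ∀ g : G, g • x = x}
  mul_mem' := by intro a b ha hb g; rw [smul_mul', ha g, hb g]
  one_mem' := fun g => smul_one g
  add_mem' := by intro a b ha hb g; rw [smul_add, ha g, hb g]
  zero_mem' := fun g => smul_zero g
  neg_mem' := by intro a ha g; rw [smul_neg, ha g]

section Aux

variable {G R : Type*} [CommGroup G] [Finite G] [CommRing R] [MulSemiringAction G R]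

/-- The `χ`-eigenpart of `A ⊗ R`. -/
def eigenSub (A : Type*) [CommRing A] [Algebra (fixedSubring G R) A] (χ : G →* Rˣ) :
    Submodule (fixedSubring G R) (A ⊗[fixedSubring G R] R) :=
  Submodule.span (fixedSubring G R)
    {t : A ⊗[fixedSubring G R] R | ∃ (a : A) (b : R),
      (∀ g : G, g • b = (χ g⁻¹ : R) * b) ∧ t = a ⊗ₜ b}

variable {A : Type*} [CommRing A] [Algebra (fixedSubring G R) A]

set_option maxHeartbeats 800000
set_option synthInstance.maxHeartbeats 400000

lemma eigenSub_mul_mem {χ ψ : G →* Rˣ} {x y : A ⊗[fixedSubring G R] R}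
    (hx : x ∈ eigenSub A χ) (hy : y ∈ eigenSub A ψ) :
    x * y ∈ eigenSub A (χ * ψ) := by
  have key : ∀ s ∈ {t : A ⊗[fixedSubring G R] R | ∃ (a : A) (b : R),
      (∀ g : G, g • b = (χ g⁻¹ : R) * b) ∧ t = a ⊗ₜ b},
      ∀ y ∈ eigenSub A ψ, s * y ∈ eigenSub A (χ * ψ) := by
    rintro _ ⟨a, b, hb, rfl⟩ y hy
    induction hy using Submodule.span_induction with
    | mem t ht =>
      obtain ⟨a', b', hb', rfl⟩ := ht
      rw [Algebra.TensorProduct.tmul_mul_tmul]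
      refine Submodule.subset_span ⟨a * a', b * b', fun g => ?_, rfl⟩
      rw [smul_mul', hb g, hb' g]
      simp only [MonoidHom.mul_apply, Units.val_mul]
      ring
    | zero => rw [mul_zero]; exact Submodule.zero_mem _
    | add u v _ _ hu hv => rw [mul_add]; exact Submodule.add_mem _ hu hv
    | smul c u _ hu => rw [mul_smul_comm]; exact Submodule.smul_mem _ c hu
  induction hx using Submodule.span_induction with
  | mem t ht => exact key t ht y hy
  | zero => rw [zero_mul]; exact Submodule.zero_mem _
  | add u v _ _ hu hv => rw [add_mul]; exact Submodule.add_mem _ hu hv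
  | smul c u _ hu => rw [smul_mul_assoc]; exact Submodule.smul_mem _ c hu

lemma eigenSub_pow_mem {χ : G →* Rˣ} {x : A ⊗[fixedSubring G R] R}
    (hx : x ∈ eigenSub A χ) (n : ℕ) : x ^ n ∈ eigenSub A (χ ^ n) := by
  induction n with
  | zero =>
    refine Submodule.subset_span ⟨1, 1, fun g => by simp, ?_⟩
    rw [pow_zero, Algebra.TensorProduct.one_def]
  | succ n ih =>
    rw [pow_succ, show χ ^ (n + 1) = χ ^ n * χ from pow_succ χ n]
    exact eigenSub_mul_mem ih hx

end Aux

/-- Nilpotency of the kernel of the multiplication map on eigencomponents: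
let the finite abelian group `G` act on the commutative ring `R`, let `A` be
an `R^G`-algebra embedding (via `iA`) into a field `L` into which `R` also
maps compatibly over `R^G`, and let `α : A ⊗_{R^G} R → L` be the
multiplication map `a ⊗ b ↦ a·b`.  Then any element `z` of the `χ`-eigenpart
of `A ⊗_{R^G} R` (the `R^G`-span of simple tensors `a ⊗ b` with `b`
`G`-homogeneous of weight `χ`) killed by `α` satisfies `z ^ |G| = 0` (its
`|G|`-th power lies in the kernel of the trivial-weight component, which is
zero); in particular `z` is nilpotent. -/
theorem stmt_14 {G R : Type*} [CommGroup G] [Finite G] [CommRing R]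
    [MulSemiringAction G R]
    {A : Type*} [CommRing A] [Algebra (fixedSubring G R) A]
    {L : Type*} [Field L] [Algebra (fixedSubring G R) L]
    (iA : A →ₐ[fixedSubring G R] L) (hiA : Function.Injective iA)
    (iR : R →ₐ[fixedSubring G R] L)
    (χ : G →* Rˣ) (z : A ⊗[fixedSubring G R] R)
    (hz : z ∈ Submodule.span (fixedSubring G R)
      {t : A ⊗[fixedSubring G R] R | ∃ (a : A) (b : R),
        (∀ g : G, g • b = (χ g⁻¹ : R) * b) ∧ t = a ⊗ₜ b})
    (hker : Algebra.TensorProduct.lift iA iR (fun a b => Commute.all _ _) z = 0) :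
    z ^ Nat.card G = 0 ∧ IsNilpotent z := by
  set α := Algebra.TensorProduct.lift iA iR (fun a b => Commute.all _ _) with hα
  -- z ^ Nat.card G lies in the χ^N eigenpart
  have hpow : z ^ Nat.card G ∈ eigenSub A (χ ^ Nat.card G) := eigenSub_pow_mem hz (Nat.card G)
  -- elements of the χ^N eigenpart are of the form w ⊗ 1
  have hrange : eigenSub A (χ ^ Nat.card G) ≤
      LinearMap.range (Algebra.TensorProduct.includeLeft :
        A →ₐ[fixedSubring G R] A ⊗[fixedSubring G R] R).toLinearMap := by
    apply Submodule.span_le.2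
    rintro _ ⟨a, b, hb, rfl⟩
    have hbfix : ∀ g : G, g • b = b := by
      intro g
      have h1 : ((χ ^ Nat.card G) g⁻¹ : R) = 1 := by
        have : (χ ^ Nat.card G) g⁻¹ = χ (g⁻¹ ^ Nat.card G) := by
          rw [map_pow]; rfl
        rw [this, pow_card_eq_one', map_one, Units.val_one]
      rw [hb g, h1, one_mul]
    refine ⟨(⟨b, hbfix⟩ : fixedSubring G R) • a, ?_⟩
    show ((⟨b, hbfix⟩ : fixedSubring G R) • a) ⊗ₜ[fixedSubring G R] (1 : R) = a ⊗ₜ b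
    rw [TensorProduct.smul_tmul]
    congr 1
    show b * 1 = b
    rw [mul_one]
  obtain ⟨w, hw⟩ := hrange hpow
  have hαz : α (z ^ Nat.card G) = 0 := by rw [map_pow, hker, zero_pow Nat.card_pos.ne']
  have hiw : α (z ^ Nat.card G) = iA w := by
    rw [← hw]
    show α (w ⊗ₜ 1) = iA w
    rw [Algebra.TensorProduct.lift_tmul, map_one, mul_one]
  have hw0 : w = 0 := by
    apply hiA
    rw [map_zero, ← hiw, hαz]
  have hz0 : z ^ Nat.card G = 0 := by
    rw [← hw, hw0]
    simp
  exact ⟨hz0, ⟨Nat.card G, hz0⟩⟩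
end

section
/- Eigenfunction avoiding a non-branch prime: Let G be a finite abelian group acting faithfully diagonally on R = ℂ[x₁,…,xₙ], and let t₁,…,t_k ∈ R be irreducible elements such that the set {(t₁),…,(t_k)} of prime ideals is permuted by G, the product t₁⋯t_k is G-homogeneous, and there exists u ∈ R with t₁⋯t_k·u G-invariant and u ∉ (t_i) for all i. Then for every character χ ∈ G^∨ with R_χ ≠ 0, there exists f ∈ R_χ, f ≠ 0, with f ∉ (t_i) for all i. -/
/-- `f ∈ R` is `G`-homogeneous of weight `χ : G →* Rˣ`: `g • f = χ (g⁻¹) * f`. -/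
def HomogPoly {G R : Type*} [Group G] [CommRing R]
    [MulSemiringAction G R] (f : R) (χ : G →* Rˣ) : Prop :=
  ∀ g : G, g • f = (χ g⁻¹ : R) * f

/-- Eigenfunction avoiding a non-branch prime: let the finite abelian group
`G` act on the UFD `R`, let `t 1, …, t k` be pairwise non-associate
irreducible elements whose prime ideals are transitively permuted by `G`,
whose product is `G`-homogeneous, and suppose there is `u ∈ R` with
`t 1 ⋯ t k · u` being `G`-invariant and `u ∉ (t i)` for all `i`.  Then every
character `χ` admitting a nonzero `G`-homogeneous element of weight `χ`
admits one lying outside all the primes `(t i)`. -/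
theorem stmt_17 {G R : Type*} [CommGroup G] [Finite G] [CommRing R] [IsDomain R]
    [UniqueFactorizationMonoid R] [MulSemiringAction G R]
    {k : ℕ} (t : Fin k → R)
    (hirr : ∀ i, Irreducible (t i))
    (hdist : ∀ i j, i ≠ j → Ideal.span {t i} ≠ Ideal.span {t j})
    -- `G` permutes the primes `(t i)`, transitively
    (hperm : ∀ (g : G) (i : Fin k), ∃ j, Ideal.span {g • t i} = Ideal.span {t j})
    (htrans : ∀ i j : Fin k, ∃ g : G, Ideal.span {g • t i} = Ideal.span {t j})
    -- the product `t 1 ⋯ t k` is `G`-homogeneous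
    (τ : G →* Rˣ) (hprod : HomogPoly (∏ i, t i) τ)
    (u : R)
    (huinv : ∀ g : G, g • ((∏ i, t i) * u) = (∏ i, t i) * u)
    (hu : ∀ i, u ∉ Ideal.span {t i}) :
    ∀ χ : G →* Rˣ, (∃ f₀ : R, f₀ ≠ 0 ∧ HomogPoly f₀ χ) →
      ∃ f : R, f ≠ 0 ∧ HomogPoly f χ ∧ ∀ i, f ∉ Ideal.span {t i} := by
  classical
  rintro χ ⟨f₀, hf₀, hχ⟩
  rcases Nat.eq_zero_or_pos k with hk | hk
  · subst hk
    exact ⟨f₀, hf₀, hχ, fun i => i.elim0⟩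
  have hpr : ∀ i, Prime (t i) := fun i =>
    (UniqueFactorizationMonoid.irreducible_iff_prime).mp (hirr i)
  set T : R := ∏ i, t i with hT
  have hTne : T ≠ 0 := Finset.prod_ne_zero_iff.mpr fun i _ => (hpr i).ne_zero
  -- `u` is homogeneous of weight `τ⁻¹`
  have huw : ∀ g : G, g • u = (τ g : R) * u := by
    intro g
    have h1 := huinv g
    rw [smul_mul', hprod g] at h1
    have h2 : T * ((τ g⁻¹ : R) * (g • u)) = T * u := by linear_combination h1
    have h3 : (τ g⁻¹ : R) * (g • u) = u := mul_left_cancel₀ hTne h2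
    have hτ1 : (τ g : R) * (τ g⁻¹ : R) = 1 := by
      rw [← Units.val_mul, ← map_mul, mul_inv_cancel, map_one, Units.val_one]
    linear_combination (τ g : R) * h3 - (g • u) * hτ1
  have hune : u ≠ 0 := by
    intro h
    exact hu ⟨0, hk⟩ (h ▸ Ideal.zero_mem _)
  -- transfer divisibility along the action
  have hsmul_dvd : ∀ (g : G) (a b : R), a ∣ b → g • a ∣ g • b := by
    rintro g a b ⟨c, rfl⟩
    exact ⟨g • c, (smul_mul' g a c)⟩
  -- common divisibility: for all `i`, `t i ^ n ∣ f₀ ↔ t ⟨0,hk⟩ ^ n ∣ f₀`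
  set i0 : Fin k := ⟨0, hk⟩
  have key : ∀ (i : Fin k) (n : ℕ), t i ^ n ∣ f₀ ↔ t i0 ^ n ∣ f₀ := by
    intro i n
    obtain ⟨g, hg⟩ := htrans i0 i
    have hass : Associated (g • t i0) (t i) :=
      (Ideal.span_singleton_eq_span_singleton).mp hg
    have h1 : t i ^ n ∣ f₀ ↔ (g • t i0) ^ n ∣ f₀ :=
      ((Associated.pow_pow hass).dvd_iff_dvd_left).symm
    rw [h1]
    rw [← smul_pow']
    constructor
    · intro h
      have h2 : g⁻¹ • (g • (t i0 ^ n)) ∣ g⁻¹ • f₀ := hsmul_dvd _ _ _ h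
      rw [inv_smul_smul, hχ g⁻¹, inv_inv] at h2
      exact (Units.dvd_mul_left).mp h2
    · intro h
      have h2 : g • (t i0 ^ n) ∣ g • f₀ := hsmul_dvd _ _ _ h
      rw [hχ g] at h2
      exact (Units.dvd_mul_left).mp h2
  -- the common multiplicity `m`
  have hfin : FiniteMultiplicity (t i0) f₀ :=
    FiniteMultiplicity.of_prime_left (hpr i0) hf₀
  obtain ⟨m, hm1, hm2⟩ : ∃ m : ℕ, t i0 ^ m ∣ f₀ ∧ ¬ t i0 ^ (m + 1) ∣ f₀ := by
    refine ⟨Nat.find hfin, ?_, Nat.find_spec hfin⟩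
    rcases Nat.eq_zero_or_pos (Nat.find hfin) with h0 | h0
    · rw [h0, pow_zero]; exact one_dvd _
    · have := Nat.find_min hfin (Nat.sub_lt h0 one_pos)
      rw [not_not] at this
      exact (pow_dvd_pow _ (by omega : Nat.find hfin ≤ Nat.find hfin - 1 + 1)).trans this
  have hdvd : ∀ i, t i ^ m ∣ f₀ := fun i => (key i m).mpr hm1
  have hnd : ∀ i, ¬ t i ^ (m + 1) ∣ f₀ := fun i h => hm2 ((key i (m + 1)).mp h)
  -- `T ^ m ∣ f₀`
  have hTdvd : ∀ s : Finset (Fin k), (∏ i ∈ s, t i ^ m) ∣ f₀ := by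
    intro s
    induction s using Finset.induction_on with
    | empty => simp
    | @insert a s ha ih =>
      obtain ⟨c, hc⟩ := ih
      have hta : ¬ t a ∣ ∏ i ∈ s, t i ^ m := by
        intro hd
        obtain ⟨j, hj, hdj⟩ := ((hpr a).dvd_finset_prod_iff _).mp hd
        have hdj' : t a ∣ t j := (hpr a).dvd_of_dvd_pow hdj
        have : Associated (t a) (t j) := (hirr a).associated_of_dvd (hirr j) hdj'
        exact hdist a j (fun h => ha (h ▸ hj)) (Ideal.span_singleton_eq_span_singleton.mpr this)
      have h1 : t a ^ m ∣ (∏ i ∈ s, t i ^ m) * c :=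
        hc ▸ hdvd a
      have h2 : t a ^ m ∣ c :=
        (hpr a).pow_dvd_of_dvd_mul_left m hta h1
      obtain ⟨d, hd⟩ := h2
      refine ⟨d, ?_⟩
      rw [Finset.prod_insert ha, hc, hd]
      ring
  have hTm : T ^ m ∣ f₀ := by
    have := hTdvd Finset.univ
    rw [hT, ← Finset.prod_pow]
    exact this
  obtain ⟨h, hh⟩ := hTm
  have hhne : h ≠ 0 := by
    intro h0
    exact hf₀ (by rw [hh, h0, mul_zero])
  have hhnd : ∀ i, ¬ t i ∣ h := by
    intro i hi
    apply hnd i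
    have h1 : t i ^ m ∣ T ^ m :=
      pow_dvd_pow_of_dvd (Finset.dvd_prod_of_mem t (Finset.mem_univ i)) m
    rw [hh, pow_succ]
    exact mul_dvd_mul h1 hi
  -- homogeneity of `h`
  have hhw : ∀ g : G, g • h = (χ g⁻¹ : R) * (τ g : R) ^ m * h := by
    intro g
    have h1 : g • f₀ = (τ g⁻¹ : R) ^ m * T ^ m * (g • h) := by
      rw [hh, smul_mul', smul_pow', hprod g, mul_pow]
    rw [hχ g, hh] at h1
    have hTm0 : T ^ m ≠ 0 := pow_ne_zero m hTne
    apply mul_left_cancel₀ hTm0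
    have hτ : (τ g : R) ^ m * (τ g⁻¹ : R) ^ m = 1 := by
      rw [← mul_pow, ← Units.val_mul, ← map_mul, mul_inv_cancel, map_one, Units.val_one, one_pow]
    linear_combination (-((τ g : R) ^ m)) * h1 + (-(T ^ m * (g • h))) * hτ
  -- the element `f`
  set N : ℕ := Nat.card G with hN
  have hN0 : 0 < N := Nat.card_pos
  refine ⟨u ^ (m * (N - 1)) * h, mul_ne_zero (pow_ne_zero _ hune) hhne, ?_, ?_⟩
  · intro g
    have hτN : (τ g : R) ^ (m * (N - 1)) * (τ g : R) ^ m = 1 := by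
      have hg : g ^ N = 1 := by rw [hN]; exact pow_card_eq_one'
      have h5 : m * (N - 1) + m = m * N := by
        conv_rhs => rw [← Nat.succ_pred_eq_of_pos hN0]
        rw [Nat.mul_succ, Nat.pred_eq_sub_one]
      have h6 : (τ g) ^ (m * (N - 1)) * (τ g) ^ m = 1 := by
        rw [← pow_add, h5, mul_comm m N, pow_mul, ← map_pow, hg, map_one, one_pow]
      calc (τ g : R) ^ (m * (N - 1)) * (τ g : R) ^ m
          = ((τ g ^ (m * (N - 1)) * τ g ^ m : Rˣ) : R) := by push_cast; ring
        _ = 1 := by rw [h6, Units.val_one]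
    calc g • (u ^ (m * (N - 1)) * h)
        = (g • u) ^ (m * (N - 1)) * (g • h) := by rw [smul_mul', smul_pow']
      _ = ((τ g : R) * u) ^ (m * (N - 1)) * ((χ g⁻¹ : R) * (τ g : R) ^ m * h) := by
          rw [huw g, hhw g]
      _ = (χ g⁻¹ : R) * ((τ g : R) ^ (m * (N - 1)) * (τ g : R) ^ m) *
            (u ^ (m * (N - 1)) * h) := by ring
      _ = (χ g⁻¹ : R) * (u ^ (m * (N - 1)) * h) := by rw [hτN, mul_one]
  · intro i hi
    rw [Ideal.mem_span_singleton] at hi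
    rcases (hpr i).dvd_mul.mp hi with h1 | h1
    · have : t i ∣ u := (hpr i).dvd_of_dvd_pow h1
      exact hu i (Ideal.mem_span_singleton.mpr this)
    · exact hhnd i h1
end
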